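/- Exponential supremum inequality (Donsker–Varadhan plus Bernstein step): Let μ be any probability distribution on 𝒜 and let ε ∈ (0,1] satisfy π_n(a) ≥ ε almost surely for all a ∈ 𝒜 and all n ∈ {1,…,t}. For each a ∈ 𝒜 let Z_n^IS(a) = (1{A_n = a}/π_n(A_n)) R_n − r̄(a) and V_t^IS(a) = Σ_{n=1}^t E[(Z_n^IS(a))² | ℱ_{n−1}]. Then for every l ∈ [0, ε]: E[ exp( sup_{π} { E_{A∼π}[ l · t · (r̂^IS(A, H^t) − r̄(A)) − l²(e − 2) V_t^IS(A) ] − KL(π‖μ) } ) ] ≤ 1, where the supremum is over all probability distributions π on 𝒜 and e is Euler's number. -/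

import Mathlib

/-!
By the Donsker–Varadhan formula, the supremum over `π` equals `log E_{A∼μ}[exp f_A]` with
`f_a = l t (r̂^IS(a) − r̄(a)) − l²(e−2) V_t^IS(a)`, so it suffices that `E[exp f_a] ≤ 1` for every
action `a`. Now `f_a = ∑ₙ (l Zₙ − l²(e−2) E[Zₙ² | ℱₙ₋₁])` with `Zₙ = Zₙ^IS(a)`; importance
weighting makes `Zₙ` conditionally centred, and `π_n ≥ ε ≥ l` gives `l Zₙ ≤ 1`. Since
`eˣ ≤ 1 + x + (e−2)x²` for `x ≤ 1`, we get `E[exp(l Zₙ) | ℱₙ₋₁] ≤ exp(l²(e−2) E[Zₙ² | ℱₙ₋₁])`,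
so `exp (partial sums)` is a supermartingale started at `1`.
-/

open MeasureTheory Real

namespace OfflineBandits

/-- The σ-algebra generated by the history `H^n = (A_1, R_1, …, A_n, R_n)`
(trivial for `n = 0`). -/
def hist {Ω 𝒜 : Type*} [MeasurableSpace 𝒜] (A : ℕ → Ω → 𝒜) (R : ℕ → Ω → ℝ)
    (n : ℕ) : MeasurableSpace Ω :=
  MeasurableSpace.comap (fun ω => fun i : Fin n => (A (i.1 + 1) ω, R (i.1 + 1) ω)) inferInstance

/-- `p` is a probability mass function on the finite action set `𝒜`. -/
def IsPMF {𝒜 : Type*} [Fintype 𝒜] (p : 𝒜 → ℝ) : Prop :=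
  (∀ a, 0 ≤ p a) ∧ ∑ a, p a = 1

/-- Relative entropy (KL divergence) between two pmfs on a finite set. -/
noncomputable def KL {𝒜 : Type*} [Fintype 𝒜] (p q : 𝒜 → ℝ) : ℝ :=
  ∑ a, p a * Real.log (p a / q a)

/-- Importance-sampling estimate `r̂^IS(a, H^t)` of the expected reward of action `a`. -/
noncomputable def rIS {Ω 𝒜 : Type*} [DecidableEq 𝒜] (A : ℕ → Ω → 𝒜) (R : ℕ → Ω → ℝ)
    (pol : ℕ → Ω → 𝒜 → ℝ) (t : ℕ) (a : 𝒜) (ω : Ω) : ℝ :=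
  (t : ℝ)⁻¹ * ∑ n ∈ Finset.Icc 1 t, (if A n ω = a then 1 else 0) / pol n ω (A n ω) * R n ω

/-- Importance-sampling estimate `r̂^IS(π, H^t)` of the expected reward of a policy. -/
noncomputable def rISPol {Ω 𝒜 : Type*} [Fintype 𝒜] [DecidableEq 𝒜] (A : ℕ → Ω → 𝒜) (R : ℕ → Ω → ℝ)
    (pol : ℕ → Ω → 𝒜 → ℝ) (t : ℕ) (p : 𝒜 → ℝ) (ω : Ω) : ℝ :=
  ∑ a, p a * rIS A R pol t a ω

/-- Expected reward `r̄(π)` of a policy `π`. -/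
def rPol {𝒜 : Type*} [Fintype 𝒜] (rbar : 𝒜 → ℝ) (p : 𝒜 → ℝ) : ℝ :=
  ∑ a, p a * rbar a

/-- The martingale difference `Z_n^IS(a)`. -/
noncomputable def Zis {Ω 𝒜 : Type*} [DecidableEq 𝒜] (A : ℕ → Ω → 𝒜) (R : ℕ → Ω → ℝ)
    (pol : ℕ → Ω → 𝒜 → ℝ) (rbar : 𝒜 → ℝ) (a : 𝒜) (n : ℕ) (ω : Ω) : ℝ :=
  (if A n ω = a then 1 else 0) / pol n ω (A n ω) * R n ω - rbar a

/-- The cumulative conditional variance `V_t^IS(a)` of the IS martingale. -/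
noncomputable def Vis {Ω 𝒜 : Type*} [MeasurableSpace Ω] [MeasurableSpace 𝒜] [DecidableEq 𝒜]
    (P : Measure Ω) (A : ℕ → Ω → 𝒜) (R : ℕ → Ω → ℝ)
    (pol : ℕ → Ω → 𝒜 → ℝ) (rbar : 𝒜 → ℝ) (t : ℕ) (a : 𝒜) (ω : Ω) : ℝ :=
  ∑ n ∈ Finset.Icc 1 t, (P[fun ω' => (Zis A R pol rbar a n ω') ^ 2 | hist A R (n - 1)]) ω

end OfflineBandits

open Finset
open scoped Nat ENNReal

namespace Real

theorem exp_le_quadratic_of_nonpos {x : ℝ} (hx : x ≤ 0) : exp x ≤ 1 + x + x ^ 2 / 2 := by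
  have hmono : Monotone fun y : ℝ => exp y - (1 + y + y ^ 2 / 2) := by
    refine monotone_of_deriv_nonneg (by fun_prop) fun y => ?_
    have h : HasDerivAt (fun y : ℝ => exp y - (1 + y + y ^ 2 / 2)) _ y := (hasDerivAt_exp y).sub
      (((hasDerivAt_const y 1).add (hasDerivAt_id y)).add ((hasDerivAt_pow 2 y).div_const 2))
    rw [h.deriv]
    norm_num [add_comm 1 y, add_one_le_exp]
  simpa using hmono hx

theorem hasSum_exp_sub_one_sub (x : ℝ) :
    HasSum (fun n : ℕ => x ^ (n + 2) / (n + 2)!) (exp x - 1 - x) := by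
  have h := (hasSum_nat_add_iff' 2).2 (NormedSpace.expSeries_div_hasSum_exp x)
  simpa [← exp_eq_exp_ℝ, sum_range_succ, sub_sub] using h

theorem exp_le_one_add_add_mul_sq {x : ℝ} (hx : x ≤ 1) :
    exp x ≤ 1 + x + (exp 1 - 2) * x ^ 2 := by
  rcases le_total x 0 with hx0 | hx0
  · have : (1 : ℝ) / 2 ≤ exp 1 - 2 := by linarith [exp_one_gt_d9]
    nlinarith [exp_le_quadratic_of_nonpos hx0, sq_nonneg x]
  · have hle : exp x - 1 - x ≤ x ^ 2 * (exp 1 - 1 - 1) :=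
      hasSum_le (fun n => ?_) (hasSum_exp_sub_one_sub x) ((hasSum_exp_sub_one_sub 1).mul_left _)
    · linarith
    · rw [one_pow, ← mul_div_assoc, mul_one, pow_add]
      gcongr
      exact mul_le_of_le_one_left (sq_nonneg x) (pow_le_one₀ hx0 hx)

end Real

section ExpSupermartingale

variable {Ω : Type*} {m mΩ : MeasurableSpace Ω} {P : Measure Ω}

theorem integrable_exp_of_ae_le [IsFiniteMeasure P] {X : Ω → ℝ} (hX : AEStronglyMeasurable X P)
    {C : ℝ} (hXC : ∀ᵐ ω ∂P, X ω ≤ C) : Integrable (fun ω => exp (X ω)) P := by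
  refine .of_bound (continuous_exp.comp_aestronglyMeasurable hX) (exp C) ?_
  filter_upwards [hXC] with ω hω
  simpa using hω

theorem condExp_exp_mul_le [IsFiniteMeasure P] (hm : m ≤ mΩ) {Z : Ω → ℝ} (hZ : MemLp Z 2 P)
    (hZ0 : P[Z | m] =ᵐ[P] 0) {l : ℝ} (hlZ : ∀ᵐ ω ∂P, l * Z ω ≤ 1) :
    P[fun ω => exp (l * Z ω) | m]
      ≤ᵐ[P] fun ω => exp (l ^ 2 * (exp 1 - 2) * P[fun ω => Z ω ^ 2 | m] ω) := by
  have hZi : Integrable Z P := hZ.integrable one_le_two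
  have hexp : Integrable (fun ω => exp (l * Z ω)) P :=
    integrable_exp_of_ae_le (hZ.1.const_mul l) hlZ
  have hquad : Integrable (fun ω => 1 + l * Z ω + l ^ 2 * (exp 1 - 2) * Z ω ^ 2) P :=
    ((integrable_const 1).add (hZi.const_mul l)).add (hZ.integrable_sq.const_mul _)
  have hcond : P[fun ω => 1 + l * Z ω + l ^ 2 * (exp 1 - 2) * Z ω ^ 2 | m]
      =ᵐ[P] fun ω => 1 + l ^ 2 * (exp 1 - 2) * P[fun ω => Z ω ^ 2 | m] ω := by
    set c := l ^ 2 * (exp 1 - 2)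
    have hsplit : (fun ω => 1 + l * Z ω + c * Z ω ^ 2)
        = (fun _ => (1 : ℝ)) + l • Z + c • fun ω => Z ω ^ 2 := rfl
    rw [hsplit]
    filter_upwards [condExp_add ((integrable_const 1).add (hZi.smul l))
        (hZ.integrable_sq.smul c) m, condExp_add (integrable_const 1) (hZi.smul l) m,
      condExp_smul l Z m, condExp_smul c (fun ω => Z ω ^ 2) m, hZ0] with ω h₁ h₂ h₃ h₄ h₅
    simp [h₁, h₂, h₃, h₄, h₅, condExp_const hm]
  have hmono := condExp_mono (m := m) hexp hquad (by
    filter_upwards [hlZ] with ω hω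
    linarith [exp_le_one_add_add_mul_sq hω])
  filter_upwards [hmono, hcond] with ω hle heq
  linarith [add_one_le_exp (l ^ 2 * (exp 1 - 2) * P[fun ω => Z ω ^ 2 | m] ω)]

theorem condExp_exp_sub_le_one [IsFiniteMeasure P] (hm : m ≤ mΩ) {Z : Ω → ℝ} (hZ : MemLp Z 2 P)
    (hZ0 : P[Z | m] =ᵐ[P] 0) {l : ℝ} (hlZ : ∀ᵐ ω ∂P, l * Z ω ≤ 1) :
    P[fun ω => exp (l * Z ω - l ^ 2 * (exp 1 - 2) * P[fun ω => Z ω ^ 2 | m] ω) | m] ≤ᵐ[P] 1 := by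
  set V := P[fun ω => Z ω ^ 2 | m]
  set c := l ^ 2 * (exp 1 - 2)
  have hc : 0 ≤ c := mul_nonneg (sq_nonneg l) (by linarith [add_one_le_exp 1])
  have hV : 0 ≤ᵐ[P] V := condExp_nonneg (.of_forall fun ω => sq_nonneg (Z ω))
  have hF : StronglyMeasurable[m] fun ω => exp (-(c * V ω)) :=
    (stronglyMeasurable_condExp.measurable.const_mul c).neg.exp.stronglyMeasurable
  have hG : Integrable (fun ω => exp (l * Z ω)) P :=
    integrable_exp_of_ae_le (hZ.1.const_mul l) hlZ
  have hFG : Integrable ((fun ω => exp (-(c * V ω))) * fun ω => exp (l * Z ω)) P := by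
    refine hG.bdd_mul (hF.mono hm).aestronglyMeasurable (c := 1) ?_
    filter_upwards [hV] with ω hω
    simpa using mul_nonneg hc hω
  have hsplit : (fun ω => exp (l * Z ω - c * V ω))
      = (fun ω => exp (-(c * V ω))) * fun ω => exp (l * Z ω) := by
    ext ω; simp [← exp_add, sub_eq_neg_add]
  rw [hsplit]
  filter_upwards [condExp_mul_of_stronglyMeasurable_left hF hFG hG,
    condExp_exp_mul_le hm hZ hZ0 hlZ] with ω h₁ h₂
  rw [h₁, Pi.mul_apply, Pi.one_apply, ← le_div_iff₀' (exp_pos _), one_div, ← exp_neg, neg_neg]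
  exact h₂

theorem integrable_exp_sum [IsFiniteMeasure P] {ι : Type*} {s : Finset ι} {D : ι → Ω → ℝ} {C : ℝ}
    (hD : ∀ n ∈ s, AEStronglyMeasurable (D n) P) (hDC : ∀ n ∈ s, ∀ᵐ ω ∂P, D n ω ≤ C) :
    Integrable (fun ω => exp (∑ n ∈ s, D n ω)) P := by
  refine integrable_exp_of_ae_le (Finset.aestronglyMeasurable_fun_sum s hD) (C := #s • C) ?_
  filter_upwards [(Filter.eventually_all_finset s).2 hDC] with ω hω
  exact sum_le_card_nsmul s _ C hω

theorem integral_mul_le_of_condExp_le_one [IsFiniteMeasure P] (hm : m ≤ mΩ) {F G : Ω → ℝ}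
    (hF : StronglyMeasurable[m] F) (hF0 : 0 ≤ᵐ[P] F) (hFi : Integrable F P) (hG : Integrable G P)
    (hFG : Integrable (F * G) P) (hGm : P[G | m] ≤ᵐ[P] 1) :
    ∫ ω, (F * G) ω ∂P ≤ ∫ ω, F ω ∂P := by
  have hpull := condExp_mul_of_stronglyMeasurable_left hF hFG hG
  calc ∫ ω, (F * G) ω ∂P = ∫ ω, P[F * G | m] ω ∂P := (integral_condExp hm).symm
    _ = ∫ ω, (F * P[G | m]) ω ∂P := integral_congr_ae hpull
    _ ≤ ∫ ω, F ω ∂P := by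
      refine integral_mono_ae (integrable_condExp.congr hpull) hFi ?_
      filter_upwards [hF0, hGm] with ω h₀ h₁
      exact mul_le_of_le_one_right h₀ h₁

theorem integral_exp_sum_range_le_one [IsProbabilityMeasure P] (ℱ : Filtration ℕ mΩ)
    {D : ℕ → Ω → ℝ} {C : ℝ} {k : ℕ}
    (hD : ∀ n < k, StronglyMeasurable[ℱ (n + 1)] (D n))
    (hDC : ∀ n < k, ∀ᵐ ω ∂P, D n ω ≤ C)
    (hstep : ∀ n < k, P[fun ω => exp (D n ω) | ℱ n] ≤ᵐ[P] 1) :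
    ∫ ω, exp (∑ n ∈ range k, D n ω) ∂P ≤ 1 := by
  induction k with
  | zero => simp
  | succ k ih =>
    have hDm : ∀ n < k + 1, StronglyMeasurable (D n) := fun n hn =>
      (hD n hn).mono (ℱ.le (n + 1))
    have hint : ∀ j ≤ k + 1, Integrable (fun ω => exp (∑ n ∈ range j, D n ω)) P :=
      fun j hj => integrable_exp_sum
        (fun n hn => (hDm n ((mem_range.1 hn).trans_le hj)).aestronglyMeasurable)
        (fun n hn => hDC n ((mem_range.1 hn).trans_le hj))
    have hF : StronglyMeasurable[ℱ k] fun ω => exp (∑ n ∈ range k, D n ω) := by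
      refine (Finset.measurable_fun_sum _ fun n hn => ?_).exp.stronglyMeasurable
      have hnk := mem_range.1 hn
      exact (hD n (hnk.trans k.lt_succ_self)).measurable.mono (ℱ.mono hnk) le_rfl
    have hsplit : (fun ω => exp (∑ n ∈ range (k + 1), D n ω))
        = (fun ω => exp (∑ n ∈ range k, D n ω)) * fun ω => exp (D k ω) := by
      ext ω; simp [sum_range_succ, exp_add]
    calc ∫ ω, exp (∑ n ∈ range (k + 1), D n ω) ∂P
        = ∫ ω, ((fun ω => exp (∑ n ∈ range k, D n ω)) * fun ω => exp (D k ω)) ω ∂P := by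
          rw [hsplit]
      _ ≤ ∫ ω, exp (∑ n ∈ range k, D n ω) ∂P :=
          integral_mul_le_of_condExp_le_one (ℱ.le k) hF (.of_forall fun ω => (exp_pos _).le)
            (hint k k.le_succ)
            (integrable_exp_of_ae_le (hDm k k.lt_succ_self).aestronglyMeasurable
              (hDC k k.lt_succ_self))
            (hsplit ▸ hint (k + 1) le_rfl) (hstep k k.lt_succ_self)
      _ ≤ 1 := ih (fun n hn => hD n (by omega)) (fun n hn => hDC n (by omega))
          (fun n hn => hstep n (by omega))

end ExpSupermartingale

section ImportanceWeighting

variable {Ω 𝒜 : Type*} {m mΩ : MeasurableSpace Ω} {P : Measure Ω} [IsFiniteMeasure P]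
  [MeasurableSpace 𝒜] [MeasurableSingletonClass 𝒜] [DecidableEq 𝒜]

/-- Importance weighting is conditionally unbiased. -/
theorem condExp_inv_mul_ite_mul_sub_eq_zero (hm : m ≤ mΩ) {X : Ω → 𝒜} (hX : Measurable X)
    {Y : Ω → ℝ} (hY : Integrable Y P) {q : Ω → ℝ} (hq : Measurable[m] q) {ε : ℝ} (hε : 0 < ε)
    (hqε : ∀ᵐ ω ∂P, ε ≤ q ω) {a : 𝒜} {r : 𝒜 → ℝ}
    (hXq : P[fun ω => if X ω = a then 1 else 0 | m] =ᵐ[P] q)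
    (hYr : P[Y | m ⊔ MeasurableSpace.comap X inferInstance] =ᵐ[P] fun ω => r (X ω)) :
    P[fun ω => (q ω)⁻¹ * ((if X ω = a then 1 else 0) * Y ω) - r a | m] =ᵐ[P] 0 := by
  set I : Ω → ℝ := fun ω => if X ω = a then 1 else 0
  have hmX : m ⊔ MeasurableSpace.comap X inferInstance ≤ mΩ := sup_le hm hX.comap_le
  have hIX : Measurable[MeasurableSpace.comap X inferInstance] I :=
    Measurable.ite ((comap_measurable X) (measurableSet_singleton a)) measurable_const
      measurable_const
  have hI : StronglyMeasurable[m ⊔ MeasurableSpace.comap X inferInstance] I :=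
    (hIX.mono (le_sup_right (a := m)) le_rfl).stronglyMeasurable
  have hIY : Integrable (I * Y) P := by
    refine hY.bdd_mul (hI.mono hmX).aestronglyMeasurable (c := 1) (.of_forall fun ω => ?_)
    by_cases h : X ω = a <;> simp [I, h]
  have hqIY : Integrable (q⁻¹ * (I * Y)) P := by
    refine hIY.bdd_mul (hq.mono hm le_rfl).inv.aestronglyMeasurable (c := ε⁻¹) ?_
    filter_upwards [hqε] with ω hω
    rw [Pi.inv_apply, norm_inv, Real.norm_of_nonneg (hε.le.trans hω)]
    exact inv_anti₀ hε hω
  have hIYX : P[I * Y | m ⊔ MeasurableSpace.comap X inferInstance] =ᵐ[P] r a • I := by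
    filter_upwards [condExp_mul_of_stronglyMeasurable_left hI hIY hY, hYr] with ω h₁ h₂
    by_cases h : X ω = a <;> simp [I, h₁, h₂, h]
  have hIYm : P[I * Y | m] =ᵐ[P] r a • q := by
    filter_upwards [(condExp_condExp_of_le (f := I * Y) le_sup_left hmX).symm,
      condExp_congr_ae hIYX, condExp_smul (r a) I m, hXq] with ω h₁ h₂ h₃ h₄
    rw [h₁, h₂, h₃, Pi.smul_apply, h₄, Pi.smul_apply]
  change P[q⁻¹ * (I * Y) - fun _ => r a | m] =ᵐ[P] 0
  filter_upwards [condExp_sub hqIY (integrable_const (r a)) m,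
    condExp_mul_of_stronglyMeasurable_left hq.inv.stronglyMeasurable hqIY hIY, hIYm, hqε]
    with ω h₁ h₂ h₃ h₄
  have hq0 : q ω ≠ 0 := (hε.trans_le h₄).ne'
  rw [h₁, Pi.sub_apply, h₂, Pi.mul_apply, h₃, condExp_const hm, Pi.smul_apply, Pi.inv_apply,
    smul_eq_mul, mul_comm (r a), inv_mul_cancel_left₀ hq0, sub_self, Pi.zero_apply]

end ImportanceWeighting

namespace OfflineBandits

section DonskerVaradhan

variable {𝒜 : Type*} [Fintype 𝒜]

noncomputable def gibbs (μ f : 𝒜 → ℝ) (a : 𝒜) : ℝ :=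
  μ a * exp (f a) / ∑ b, μ b * exp (f b)

theorem sum_mul_exp_pos {μ : 𝒜 → ℝ} (hμ : IsPMF μ) (f : 𝒜 → ℝ) :
    0 < ∑ a, μ a * exp (f a) := by
  obtain ⟨a, ha⟩ : ∃ a, 0 < μ a := by
    by_contra! h
    linarith [sum_nonpos fun a (_ : a ∈ univ) => h a, hμ.2]
  exact sum_pos' (fun b _ => mul_nonneg (hμ.1 b) (exp_pos _).le)
    ⟨a, mem_univ a, mul_pos ha (exp_pos _)⟩

theorem isPMF_gibbs {μ : 𝒜 → ℝ} (hμ : IsPMF μ) (f : 𝒜 → ℝ) : IsPMF (gibbs μ f) := by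
  refine ⟨fun a => div_nonneg (mul_nonneg (hμ.1 a) (exp_pos _).le) (sum_mul_exp_pos hμ f).le, ?_⟩
  simp only [gibbs]
  rw [← sum_div, div_self (sum_mul_exp_pos hμ f).ne']

theorem gibbs_eq_zero {μ : 𝒜 → ℝ} (f : 𝒜 → ℝ) {a : 𝒜} (ha : μ a = 0) : gibbs μ f a = 0 := by
  simp [gibbs, ha]

/-- Termwise Gibbs inequality: `log y ≤ y - 1` at `y = m e^f / (S p)`. -/
theorem mul_sub_log_div_le {p m f S : ℝ} (hp : 0 ≤ p) (hm : 0 ≤ m) (hpm : m = 0 → p = 0)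
    (hS : 0 < S) : p * (f - log (p / m)) ≤ p * log S + (m * exp f / S - p) := by
  rcases hp.eq_or_lt with rfl | hp
  · simp only [zero_mul, zero_add, sub_zero]; positivity
  have hm : 0 < m := hm.lt_of_ne' fun h => hp.ne' (hpm h)
  have hlog : f - log (p / m) - log S = log (m * exp f / S / p) := by
    rw [log_div (by positivity) hp.ne', log_div (by positivity) hS.ne',
      log_mul hm.ne' (exp_pos f).ne', log_exp, log_div hp.ne' hm.ne']
    ring
  have := mul_le_mul_of_nonneg_left
    (log_le_sub_one_of_pos (by positivity : 0 < m * exp f / S / p)) hp.le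
  rw [← hlog, mul_sub_one, mul_div_cancel₀ _ hp.ne'] at this
  linarith

theorem sum_mul_sub_KL_le {μ : 𝒜 → ℝ} (hμ : IsPMF μ) (f : 𝒜 → ℝ) {p : 𝒜 → ℝ} (hp : IsPMF p)
    (hpμ : ∀ a, μ a = 0 → p a = 0) :
    ∑ a, p a * f a - KL p μ ≤ log (∑ a, μ a * exp (f a)) := by
  have h := sum_le_sum fun a (_ : a ∈ univ) =>
    mul_sub_log_div_le (f := f a) (hp.1 a) (hμ.1 a) (hpμ a) (sum_mul_exp_pos hμ f)
  rw [sum_add_distrib, sum_sub_distrib, ← sum_mul, hp.2, ← sum_div,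
    div_self (sum_mul_exp_pos hμ f).ne', one_mul, sub_self, add_zero] at h
  simpa [KL, mul_sub, sum_sub_distrib] using h

theorem sum_gibbs_mul_sub_KL {μ : 𝒜 → ℝ} (hμ : IsPMF μ) (f : 𝒜 → ℝ) :
    ∑ a, gibbs μ f a * f a - KL (gibbs μ f) μ = log (∑ a, μ a * exp (f a)) := by
  have hS := sum_mul_exp_pos hμ f
  have hterm : ∀ a, gibbs μ f a * f a - gibbs μ f a * log (gibbs μ f a / μ a)
      = gibbs μ f a * log (∑ b, μ b * exp (f b)) := by
    intro a
    rcases (hμ.1 a).eq_or_lt with h0 | hpos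
    · simp [gibbs_eq_zero f h0.symm]
    · have hdiv : gibbs μ f a / μ a = exp (f a) / ∑ b, μ b * exp (f b) := by
        rw [gibbs]; field_simp
      rw [hdiv, log_div (exp_pos _).ne' hS.ne', log_exp]
      ring
  rw [KL, ← sum_sub_distrib, sum_congr rfl fun a _ => hterm a, ← sum_mul,
    (isPMF_gibbs hμ f).2, one_mul]

theorem ciSup_sum_mul_sub_KL {μ : 𝒜 → ℝ} (hμ : IsPMF μ) (f : 𝒜 → ℝ) :
    ⨆ p : {p : 𝒜 → ℝ // IsPMF p ∧ ∀ a, μ a = 0 → p a = 0}, (∑ a, p.1 a * f a - KL p.1 μ)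
      = log (∑ a, μ a * exp (f a)) := by
  have hle : ∀ p : {p : 𝒜 → ℝ // IsPMF p ∧ ∀ a, μ a = 0 → p a = 0},
      ∑ a, p.1 a * f a - KL p.1 μ ≤ log (∑ a, μ a * exp (f a)) :=
    fun p => sum_mul_sub_KL_le hμ f p.2.1 p.2.2
  have : Nonempty {p : 𝒜 → ℝ // IsPMF p ∧ ∀ a, μ a = 0 → p a = 0} := ⟨⟨μ, hμ, fun _ h => h⟩⟩
  refine le_antisymm (ciSup_le hle) ?_
  rw [← sum_gibbs_mul_sub_KL hμ f]
  exact le_ciSup (f := fun p : {p : 𝒜 → ℝ // IsPMF p ∧ ∀ a, μ a = 0 → p a = 0} =>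
    ∑ a, p.1 a * f a - KL p.1 μ) ⟨_, Set.forall_mem_range.2 hle⟩
    ⟨gibbs μ f, isPMF_gibbs hμ f, fun _ => gibbs_eq_zero f⟩

theorem integral_exp_ciSup_sum_mul_sub_KL_le_one {Ω : Type*} {mΩ : MeasurableSpace Ω}
    {P : Measure Ω} {μ : 𝒜 → ℝ} (hμ : IsPMF μ) {f : 𝒜 → Ω → ℝ}
    (hf : ∀ a, Integrable (fun ω => exp (f a ω)) P) (hf1 : ∀ a, ∫ ω, exp (f a ω) ∂P ≤ 1) :
    ∫ ω, exp (⨆ p : {p : 𝒜 → ℝ // IsPMF p ∧ ∀ a, μ a = 0 → p a = 0},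
      (∑ a, p.1 a * f a ω - KL p.1 μ)) ∂P ≤ 1 :=
  calc ∫ ω, exp (⨆ p : {p : 𝒜 → ℝ // IsPMF p ∧ ∀ a, μ a = 0 → p a = 0},
        (∑ a, p.1 a * f a ω - KL p.1 μ)) ∂P
      = ∫ ω, ∑ a, μ a * exp (f a ω) ∂P := by
        simp_rw [ciSup_sum_mul_sub_KL hμ, exp_log (sum_mul_exp_pos hμ _)]
    _ = ∑ a, μ a * ∫ ω, exp (f a ω) ∂P := by
        rw [integral_finsetSum _ fun a _ => (hf a).const_mul (μ a)]
        simp_rw [integral_const_mul]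
    _ ≤ ∑ a, μ a * 1 := sum_le_sum fun a _ => mul_le_mul_of_nonneg_left (hf1 a) (hμ.1 a)
    _ = 1 := by simp [hμ.2]

end DonskerVaradhan

section History

variable {Ω 𝒜 : Type*} [MeasurableSpace 𝒜] {A : ℕ → Ω → 𝒜}
  {R : ℕ → Ω → ℝ}

theorem measurable_hist_pair {i n : ℕ} (hi : i < n) :
    Measurable[hist A R n] fun ω => (A (i + 1) ω, R (i + 1) ω) :=
  (measurable_pi_apply (⟨i, hi⟩ : Fin n)).comp
    (comap_measurable fun ω (j : Fin n) => (A (j.1 + 1) ω, R (j.1 + 1) ω))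

theorem measurable_hist_A (n : ℕ) : Measurable[hist A R (n + 1)] (A (n + 1)) :=
  (measurable_hist_pair n.lt_succ_self).fst

theorem measurable_hist_R (n : ℕ) : Measurable[hist A R (n + 1)] (R (n + 1)) :=
  (measurable_hist_pair n.lt_succ_self).snd

theorem hist_mono : Monotone (hist A R) := by
  intro m n h
  let _ := hist A R n
  exact (measurable_pi_lambda _ fun i => measurable_hist_pair (i.2.trans_le h)).comap_le

theorem hist_le [mΩ : MeasurableSpace Ω] (hA : ∀ n, Measurable (A n))
    (hR : ∀ n, Measurable (R n)) (n : ℕ) : hist A R n ≤ mΩ :=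
  (measurable_pi_lambda _ fun _ => (hA _).prodMk (hR _)).comap_le

def histFiltration [mΩ : MeasurableSpace Ω] (hA : ∀ n, Measurable (A n))
    (hR : ∀ n, Measurable (R n)) : Filtration ℕ mΩ :=
  ⟨hist A R, hist_mono, hist_le hA hR⟩

end History

section ImportanceSampling

variable {Ω 𝒜 : Type*} [DecidableEq 𝒜] {A : ℕ → Ω → 𝒜} {R : ℕ → Ω → ℝ}
  {pol : ℕ → Ω → 𝒜 → ℝ} {rbar : 𝒜 → ℝ}

theorem Zis_eq (a : 𝒜) (n : ℕ) : Zis A R pol rbar a n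
    = fun ω => (pol n ω a)⁻¹ * ((if A n ω = a then 1 else 0) * R n ω) - rbar a := by
  ext ω
  by_cases h : A n ω = a <;> simp [Zis, h]

theorem Zis_mem_Icc {a : 𝒜} {n : ℕ} {ω : Ω} {ε : ℝ} (hε : 0 < ε) (hpol : ε ≤ pol n ω a)
    (hR : R n ω ∈ Set.Icc (0 : ℝ) 1) :
    Zis A R pol rbar a n ω ∈ Set.Icc (-rbar a) (ε⁻¹ - rbar a) := by
  have hinv : 0 ≤ (pol n ω a)⁻¹ := inv_nonneg.2 (hε.trans_le hpol).le
  have hw : (pol n ω a)⁻¹ * R n ω ∈ Set.Icc 0 ε⁻¹ :=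
    ⟨mul_nonneg hinv hR.1, (mul_le_of_le_one_right hinv hR.2).trans (inv_anti₀ hε hpol)⟩
  rw [Zis_eq]
  by_cases h : A n ω = a
  · simpa [h] using hw
  · simpa [h] using inv_nonneg.2 hε.le

theorem mul_Zis_le_one {a : 𝒜} {n : ℕ} {ω : Ω} {ε l : ℝ} (hε : 0 < ε) (hpol : ε ≤ pol n ω a)
    (hR : R n ω ∈ Set.Icc (0 : ℝ) 1) (hrbar : 0 ≤ rbar a) (hl : l ∈ Set.Icc 0 ε) :
    l * Zis A R pol rbar a n ω ≤ 1 :=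
  calc l * Zis A R pol rbar a n ω ≤ l * ε⁻¹ :=
        mul_le_mul_of_nonneg_left ((Zis_mem_Icc hε hpol hR).2.trans (by linarith)) hl.1
    _ ≤ ε * ε⁻¹ := mul_le_mul_of_nonneg_right hl.2 (inv_nonneg.2 hε.le)
    _ = 1 := mul_inv_cancel₀ hε.ne'

variable [MeasurableSpace 𝒜]

theorem mul_rIS_sub_sub_mul_Vis_eq_sum {mΩ : MeasurableSpace Ω} (P : Measure Ω) {t : ℕ}
    (ht : t ≠ 0) (l c : ℝ) (a : 𝒜) (ω : Ω) :
    l * t * (rIS A R pol t a ω - rbar a) - c * Vis P A R pol rbar t a ω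
      = ∑ n ∈ range t, (l * Zis A R pol rbar a (n + 1) ω
          - c * P[fun ω' => Zis A R pol rbar a (n + 1) ω' ^ 2 | hist A R n] ω) := by
  have hshift (f : ℕ → ℝ) : ∑ n ∈ Icc 1 t, f n = ∑ n ∈ range t, f (n + 1) := by
    rw [range_eq_Ico, sum_Ico_add', zero_add, Ico_add_one_right_eq_Icc]
  have hZ : ∑ n ∈ Icc 1 t, Zis A R pol rbar a n ω = t * (rIS A R pol t a ω - rbar a) := by
    rw [rIS, mul_sub, mul_inv_cancel_left₀ (Nat.cast_ne_zero.2 ht)]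
    simp [Zis, sum_sub_distrib]
  rw [sum_sub_distrib, ← mul_sum, ← mul_sum, ← hshift fun n => Zis A R pol rbar a n ω, hZ, Vis,
    hshift]
  simp only [Nat.add_sub_cancel]
  ring

variable [MeasurableSingletonClass 𝒜]

theorem measurable_Zis (hpolMeas : ∀ n a, Measurable[hist A R (n - 1)] fun ω => pol n ω a)
    (a : 𝒜) (n : ℕ) : Measurable[hist A R (n + 1)] (Zis A R pol rbar a (n + 1)) := by
  rw [Zis_eq]
  have hI : Measurable[hist A R (n + 1)] fun ω => if A (n + 1) ω = a then (1 : ℝ) else 0 :=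
    Measurable.ite (measurable_hist_A n (measurableSet_singleton a)) measurable_const
      measurable_const
  exact (((hpolMeas (n + 1) a).mono (hist_mono n.le_succ) le_rfl).inv.mul
    (hI.mul (measurable_hist_R n))).sub_const _

theorem condExp_Zis_eq_zero {mΩ : MeasurableSpace Ω} {P : Measure Ω} [IsFiniteMeasure P]
    (hA : ∀ n, Measurable (A n)) (hR : ∀ n, Measurable (R n))
    (hR01 : ∀ n ω, R n ω ∈ Set.Icc (0 : ℝ) 1)
    (hpolMeas : ∀ n a, Measurable[hist A R (n - 1)] fun ω => pol n ω a)
    {ε : ℝ} (hε : 0 < ε) {a : 𝒜} {n : ℕ} (hεn : ∀ᵐ ω ∂P, ε ≤ pol n ω a)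
    (hpolCond : P[fun ω => if A n ω = a then (1 : ℝ) else 0 | hist A R (n - 1)]
      =ᵐ[P] fun ω => pol n ω a)
    (hrew : P[R n | hist A R (n - 1) ⊔ MeasurableSpace.comap (A n) inferInstance]
      =ᵐ[P] fun ω => rbar (A n ω)) :
    P[Zis A R pol rbar a n | hist A R (n - 1)] =ᵐ[P] 0 := by
  rw [Zis_eq]
  exact condExp_inv_mul_ite_mul_sub_eq_zero (hist_le hA hR _) (hA n)
    (.of_bound (hR n).aestronglyMeasurable 1 (.of_forall fun ω => by
      rw [Real.norm_of_nonneg (hR01 n ω).1]; exact (hR01 n ω).2))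
    (hpolMeas n a) hε hεn hpolCond hrew

theorem memLp_Zis {mΩ : MeasurableSpace Ω} {P : Measure Ω} [IsFiniteMeasure P]
    (hA : ∀ n, Measurable (A n)) (hR : ∀ n, Measurable (R n))
    (hR01 : ∀ n ω, R n ω ∈ Set.Icc (0 : ℝ) 1)
    (hpolMeas : ∀ n a, Measurable[hist A R (n - 1)] fun ω => pol n ω a)
    {ε : ℝ} (hε : 0 < ε) {a : 𝒜} {n : ℕ} (hεn : ∀ᵐ ω ∂P, ε ≤ pol (n + 1) ω a) (p : ℝ≥0∞) :
    MemLp (Zis A R pol rbar a (n + 1)) p P := by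
  refine .of_bound
    ((measurable_Zis hpolMeas a n).mono (hist_le hA hR _) le_rfl).aestronglyMeasurable
    (ε⁻¹ + |rbar a|) ?_
  filter_upwards [hεn] with ω hω
  have hZ := Zis_mem_Icc (A := A) (rbar := rbar) hε hω (hR01 _ ω)
  rw [Real.norm_eq_abs, abs_le]
  constructor <;>
    linarith [hZ.1, hZ.2, inv_nonneg.2 hε.le, neg_abs_le (rbar a), le_abs_self (rbar a)]

theorem integrable_and_integral_exp_rIS_le_one {mΩ : MeasurableSpace Ω} {P : Measure Ω}
    [IsProbabilityMeasure P] {t : ℕ} (ht : t ≠ 0)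
    (hA : ∀ n, Measurable (A n)) (hR : ∀ n, Measurable (R n))
    (hR01 : ∀ n ω, R n ω ∈ Set.Icc (0 : ℝ) 1)
    (hpolMeas : ∀ n a, Measurable[hist A R (n - 1)] fun ω => pol n ω a)
    (hpolCond : ∀ n, 1 ≤ n → n ≤ t → ∀ a : 𝒜,
      P[fun ω => if A n ω = a then (1 : ℝ) else 0 | hist A R (n - 1)] =ᵐ[P] fun ω => pol n ω a)
    (hrbar : ∀ a, 0 ≤ rbar a)
    (hrew : ∀ n, 1 ≤ n → n ≤ t →
      P[R n | hist A R (n - 1) ⊔ MeasurableSpace.comap (A n) inferInstance]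
        =ᵐ[P] fun ω => rbar (A n ω))
    {ε : ℝ} (hε : 0 < ε) (hεpol : ∀ n, 1 ≤ n → n ≤ t → ∀ a : 𝒜, ∀ᵐ ω ∂P, ε ≤ pol n ω a)
    {l : ℝ} (hl : l ∈ Set.Icc 0 ε) (a : 𝒜) :
    let f := fun ω => exp (l * t * (rIS A R pol t a ω - rbar a)
      - l ^ 2 * (exp 1 - 2) * Vis P A R pol rbar t a ω)
    Integrable f P ∧ ∫ ω, f ω ∂P ≤ 1 := by
  set Z := fun n => Zis A R pol rbar a (n + 1)
  set D := fun n ω => l * Z n ω - l ^ 2 * (exp 1 - 2) * P[fun ω' => Z n ω' ^ 2 | hist A R n] ω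
  have hεn : ∀ n < t, ∀ᵐ ω ∂P, ε ≤ pol (n + 1) ω a := fun n hn =>
    hεpol (n + 1) (by omega) (by omega) a
  have hlZ : ∀ n < t, ∀ᵐ ω ∂P, l * Z n ω ≤ 1 := fun n hn =>
    (hεn n hn).mono fun ω hω => mul_Zis_le_one hε hω (hR01 _ ω) (hrbar a) hl
  have hD : ∀ n < t, StronglyMeasurable[hist A R (n + 1)] (D n) := fun n _ =>
    (((measurable_Zis hpolMeas a n).const_mul l).sub
      ((stronglyMeasurable_condExp.measurable.mono (hist_mono n.le_succ) le_rfl).const_mul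
        _)).stronglyMeasurable
  have hD1 : ∀ n < t, ∀ᵐ ω ∂P, D n ω ≤ 1 := fun n hn => by
    filter_upwards [hlZ n hn, condExp_nonneg (m := hist A R n) (μ := P)
      (.of_forall fun ω => sq_nonneg (Z n ω))] with ω h₁ h₂
    have hc : 0 ≤ l ^ 2 * (exp 1 - 2) := mul_nonneg (sq_nonneg l) (by linarith [add_one_le_exp 1])
    nlinarith [mul_nonneg hc h₂]
  have hsum : (fun ω => exp (l * t * (rIS A R pol t a ω - rbar a)
      - l ^ 2 * (exp 1 - 2) * Vis P A R pol rbar t a ω)) = fun ω => exp (∑ n ∈ range t, D n ω) :=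
    funext fun ω => by rw [mul_rIS_sub_sub_mul_Vis_eq_sum P ht]
  simp only [hsum]
  refine ⟨integrable_exp_sum
    (fun n hn => ((hD n (mem_range.1 hn)).mono (hist_le hA hR _)).aestronglyMeasurable)
    (fun n hn => hD1 n (mem_range.1 hn)), ?_⟩
  refine integral_exp_sum_range_le_one (histFiltration hA hR) hD hD1 fun n hn => ?_
  exact condExp_exp_sub_le_one (hist_le hA hR n) (memLp_Zis hA hR hR01 hpolMeas hε (hεn n hn) 2)
    (condExp_Zis_eq_zero hA hR hR01 hpolMeas hε (hεn n hn)
      (hpolCond (n + 1) (by omega) (by omega) a) (hrew (n + 1) (by omega) (by omega))) (hlZ n hn)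

end ImportanceSampling

theorem exp_sup_inequality_bernstein_general
    {Ω 𝒜 : Type*} [MeasurableSpace Ω] [Fintype 𝒜] [DecidableEq 𝒜]
    [MeasurableSpace 𝒜] [MeasurableSingletonClass 𝒜]
    (P : Measure Ω) [IsProbabilityMeasure P]
    -- the horizon
    (t : ℕ) (ht : 1 ≤ t)
    -- the action and reward processes
    (A : ℕ → Ω → 𝒜) (R : ℕ → Ω → ℝ)
    (hA : ∀ n, Measurable (A n)) (hR : ∀ n, Measurable (R n))
    (hR01 : ∀ n ω, R n ω ∈ Set.Icc (0 : ℝ) 1)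
    -- the logging policies: `ℱ_{n-1}`-measurable pmfs on `𝒜`
    (pol : ℕ → Ω → 𝒜 → ℝ)
    (hpolMeas : ∀ n a, Measurable[hist A R (n - 1)] (fun ω => pol n ω a))
    -- the conditional distribution of `A_n` given `ℱ_{n-1}` is `π_n`
    (hpolCond : ∀ n, 1 ≤ n → n ≤ t → ∀ a : 𝒜,
      (P[(fun ω => if A n ω = a then (1 : ℝ) else 0) | hist A R (n - 1)])
        =ᵐ[P] fun ω => pol n ω a)
    -- the mean-reward function: `E[R_n | ℱ_{n-1}, A_n] = r̄(A_n)`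
    (rbar : 𝒜 → ℝ) (hrbar : ∀ a, rbar a ∈ Set.Icc (0 : ℝ) 1)
    (hrew : ∀ n, 1 ≤ n → n ≤ t →
      (P[R n | hist A R (n - 1) ⊔ MeasurableSpace.comap (A n) inferInstance])
        =ᵐ[P] fun ω => rbar (A n ω))
    -- a uniform lower bound on the logging policies
    (ε : ℝ) (hε0 : 0 < ε)
    (hεpol : ∀ n, 1 ≤ n → n ≤ t → ∀ a : 𝒜, ∀ᵐ ω ∂P, ε ≤ pol n ω a)
    -- the prior policy
    (μ : 𝒜 → ℝ) (hμ : IsPMF μ)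
    (l : ℝ) (hl : l ∈ Set.Icc 0 ε) :
    ∫ ω, Real.exp
        (⨆ p : {p : 𝒜 → ℝ // IsPMF p ∧ ∀ a, μ a = 0 → p a = 0},
          ((∑ a, p.1 a * (l * t * (rIS A R pol t a ω - rbar a)
              - l ^ 2 * (Real.exp 1 - 2) * Vis P A R pol rbar t a ω))
            - KL p.1 μ)) ∂P ≤ 1 := by
  have hexp := integrable_and_integral_exp_rIS_le_one (P := P) (by omega) hA hR hR01 hpolMeas
    hpolCond (fun a => (hrbar a).1) hrew hε0 hεpol hl
  exact integral_exp_ciSup_sum_mul_sub_KL_le_one hμ (fun a => (hexp a).1) (fun a => (hexp a).2)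

/-- **Exponential supremum inequality (Donsker–Varadhan plus Bernstein step)**:
for every `l ∈ [0, ε]`,
`E[exp(sup_π {E_{A∼π}[l t (r̂^IS(A,H^t) − r̄(A)) − l²(e−2) V_t^IS(A)] − KL(π‖μ)})] ≤ 1`. -/
theorem exp_sup_inequality_bernstein
    {Ω 𝒜 : Type*} [MeasurableSpace Ω] [Fintype 𝒜] [DecidableEq 𝒜]
    [MeasurableSpace 𝒜] [MeasurableSingletonClass 𝒜]
    (P : Measure Ω) [IsProbabilityMeasure P]
    -- the horizon
    (t : ℕ) (ht : 1 ≤ t)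
    -- the action and reward processes
    (A : ℕ → Ω → 𝒜) (R : ℕ → Ω → ℝ)
    (hA : ∀ n, Measurable (A n)) (hR : ∀ n, Measurable (R n))
    (hR01 : ∀ n ω, R n ω ∈ Set.Icc (0 : ℝ) 1)
    -- the logging policies: `ℱ_{n-1}`-measurable pmfs on `𝒜`
    (pol : ℕ → Ω → 𝒜 → ℝ)
    (hpolPMF : ∀ n ω, IsPMF (pol n ω))
    (hpolMeas : ∀ n a, Measurable[hist A R (n - 1)] (fun ω => pol n ω a))
    -- the conditional distribution of `A_n` given `ℱ_{n-1}` is `π_n`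
    (hpolCond : ∀ n, 1 ≤ n → n ≤ t → ∀ a : 𝒜,
      (P[(fun ω => if A n ω = a then (1 : ℝ) else 0) | hist A R (n - 1)])
        =ᵐ[P] fun ω => pol n ω a)
    -- the mean-reward function: `E[R_n | ℱ_{n-1}, A_n] = r̄(A_n)`
    (rbar : 𝒜 → ℝ) (hrbar : ∀ a, rbar a ∈ Set.Icc (0 : ℝ) 1)
    (hrew : ∀ n, 1 ≤ n → n ≤ t →
      (P[R n | hist A R (n - 1) ⊔ MeasurableSpace.comap (A n) inferInstance])
        =ᵐ[P] fun ω => rbar (A n ω))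
    -- a uniform lower bound on the logging policies
    (ε : ℝ) (hε0 : 0 < ε) (hε1 : ε ≤ 1)
    (hεpol : ∀ n, 1 ≤ n → n ≤ t → ∀ a : 𝒜, ∀ᵐ ω ∂P, ε ≤ pol n ω a)
    -- the prior policy
    (μ : 𝒜 → ℝ) (hμ : IsPMF μ)
    (l : ℝ) (hl : l ∈ Set.Icc 0 ε) :
    ∫ ω, Real.exp
        (⨆ p : {p : 𝒜 → ℝ // IsPMF p ∧ ∀ a, μ a = 0 → p a = 0},
          ((∑ a, p.1 a * (l * t * (rIS A R pol t a ω - rbar a)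
              - l ^ 2 * (Real.exp 1 - 2) * Vis P A R pol rbar t a ω))
            - KL p.1 μ)) ∂P ≤ 1 :=
  exp_sup_inequality_bernstein_general P t ht A R hA hR hR01 pol hpolMeas hpolCond rbar hrbar hrew ε
    hε0 hεpol μ hμ l hl

end OfflineBandits
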